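/- arXiv:1704.00791 — 6 statements merged into one kernel-verified Lean document; each statement's English description precedes it below -/
import Mathlib

section
/- If (z_m) is a bounded sequence in ℓ∞ converging coordinate-wise to z ∈ ℓ∞, then lim_m |||z_m||| exists if and only if lim_m ‖z_m‖_∞ exists; moreover lim_m |||z_m||| = |||z||| if and only if lim_m ‖z_m‖_∞ = ‖z‖_∞. -/
open Filter Topology

/-- The sup norm of a real sequence. -/
noncomputable def supNorm (x : ℕ → ℝ) : ℝ := ⨆ k, |x k|

/-- The duality pairing `⟨x, v⟩ = ∑ₖ x k * v k`. -/
noncomputable def pairing (x v : ℕ → ℝ) : ℝ := ∑' k, x k * v k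

/-- Read's norm `|||x||| = ‖x‖_∞ + ∑ₙ rₙ |⟨x, vₙ⟩|`. -/
noncomputable def readNorm (r : ℕ → ℝ) (v : ℕ → ℕ → ℝ) (x : ℕ → ℝ) : ℝ :=
  supNorm x + ∑' n, r n * |pairing x (v n)|

/-!
`|||z_m||| - ‖z_m‖_∞ = ∑ₙ rₙ |⟨z_m, vₙ⟩|`, and this perturbation converges to its value at `z`:
each pairing converges by dominated convergence (the terms are bounded by `C |vₙ k|`), and then
so does the weighted series (its terms are bounded by `|rₙ| C`). Adding a convergent sequence
changes neither the existence of a limit nor, after shifting by its limit, the value.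
-/

section AddConvergent

variable {α G : Type*} [AddCommGroup G] [TopologicalSpace G] [IsTopologicalAddGroup G]
  {l : Filter α} {f g : α → G} {b : G}

lemma tendsto_add_iff_of_tendsto (hg : Tendsto g l (𝓝 b)) (a : G) :
    Tendsto (fun x => f x + g x) l (𝓝 (a + b)) ↔ Tendsto f l (𝓝 a) := by
  refine ⟨fun h => ?_, fun h => h.add hg⟩
  simpa using h.sub hg

lemma exists_tendsto_add_iff_of_tendsto (hg : Tendsto g l (𝓝 b)) :
    (∃ L, Tendsto (fun x => f x + g x) l (𝓝 L)) ↔ ∃ L, Tendsto f l (𝓝 L) := by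
  refine ⟨fun ⟨L, hL⟩ => ⟨L - b, ?_⟩, fun ⟨a, ha⟩ => ⟨a + b, ha.add hg⟩⟩
  rwa [← tendsto_add_iff_of_tendsto hg, sub_add_cancel]

end AddConvergent

lemma abs_pairing_le {x v : ℕ → ℝ} {C : ℝ} (hv : Summable fun k => |v k|)
    (hx : ∀ k, |x k| ≤ C) : |pairing x v| ≤ C * ∑' k, |v k| :=
  tsum_of_norm_bounded (hv.hasSum.mul_left C) fun k => by
    rw [Real.norm_eq_abs, abs_mul]
    exact mul_le_mul_of_nonneg_right (hx k) (abs_nonneg _)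

section BoundedPointwiseConvergence

variable {α : Type*} {l : Filter α} {z : α → ℕ → ℝ} {zl : ℕ → ℝ} {C : ℝ}

lemma tendsto_pairing_of_bounded_of_tendsto {v : ℕ → ℝ} (hv : Summable fun k => |v k|)
    (hbdd : ∀ m k, |z m k| ≤ C) (hconv : ∀ k, Tendsto (fun m => z m k) l (𝓝 (zl k))) :
    Tendsto (fun m => pairing (z m) v) l (𝓝 (pairing zl v)) := by
  refine tendsto_tsum_of_dominated_convergence (hv.mul_left C)
    (fun k => (hconv k).mul_const _) (Eventually.of_forall fun m k => ?_)
  rw [Real.norm_eq_abs, abs_mul]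
  exact mul_le_mul_of_nonneg_right (hbdd m k) (abs_nonneg _)

lemma tendsto_tsum_mul_abs_pairing {r : ℕ → ℝ} (hr : Summable r) {v : ℕ → ℕ → ℝ}
    (hv1 : ∀ n, Summable fun k => |v n k|) (hv2 : ∀ n, ∑' k, |v n k| = 1)
    (hbdd : ∀ m k, |z m k| ≤ C) (hconv : ∀ k, Tendsto (fun m => z m k) l (𝓝 (zl k))) :
    Tendsto (fun m => ∑' n, r n * |pairing (z m) (v n)|) l
      (𝓝 (∑' n, r n * |pairing zl (v n)|)) := by
  refine tendsto_tsum_of_dominated_convergence (hr.abs.mul_right C)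
    (fun n => (tendsto_pairing_of_bounded_of_tendsto (hv1 n) hbdd hconv).abs.const_mul _)
    (Eventually.of_forall fun m n => ?_)
  have hpair : |pairing (z m) (v n)| ≤ C := by
    simpa [hv2 n] using abs_pairing_le (hv1 n) (hbdd m)
  rw [Real.norm_eq_abs, abs_mul, abs_abs]
  exact mul_le_mul_of_nonneg_left hpair (abs_nonneg _)

end BoundedPointwiseConvergence

theorem read_norm_convergence_iff_sup_norm_convergence_general
    (r : ℕ → ℝ) (hrsum : Summable r)
    (v : ℕ → ℕ → ℝ) (hv1 : ∀ n, Summable fun k => |v n k|)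
    (hv2 : ∀ n, ∑' k, |v n k| = 1)
    (z : ℕ → ℕ → ℝ) (C : ℝ) (hbdd : ∀ m k, |z m k| ≤ C)
    (zl : ℕ → ℝ)
    (hconv : ∀ k, Tendsto (fun m => z m k) atTop (𝓝 (zl k))) :
    ((∃ L, Tendsto (fun m => readNorm r v (z m)) atTop (𝓝 L)) ↔
      (∃ L, Tendsto (fun m => supNorm (z m)) atTop (𝓝 L))) ∧
    (Tendsto (fun m => readNorm r v (z m)) atTop (𝓝 (readNorm r v zl)) ↔
      Tendsto (fun m => supNorm (z m)) atTop (𝓝 (supNorm zl))) :=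
  have hperturb := tendsto_tsum_mul_abs_pairing hrsum hv1 hv2 hbdd hconv
  ⟨exists_tendsto_add_iff_of_tendsto hperturb, tendsto_add_iff_of_tendsto hperturb _⟩

/-- If `(z_m)` is a bounded sequence in `ℓ∞` converging coordinate-wise to `z ∈ ℓ∞`,
then `lim_m |||z_m|||` exists iff `lim_m ‖z_m‖_∞` exists; moreover
`lim_m |||z_m||| = |||z|||` iff `lim_m ‖z_m‖_∞ = ‖z‖_∞`. -/
theorem read_norm_convergence_iff_sup_norm_convergence
    (r : ℕ → ℝ) (hr0 : ∀ n, 0 ≤ r n) (hrsum : Summable r)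
    (v : ℕ → ℕ → ℝ) (hv1 : ∀ n, Summable fun k => |v n k|)
    (hv2 : ∀ n, ∑' k, |v n k| = 1)
    (z : ℕ → ℕ → ℝ) (C : ℝ) (hbdd : ∀ m k, |z m k| ≤ C)
    (zl : ℕ → ℝ) (hzl : ∀ k, |zl k| ≤ C)
    (hconv : ∀ k, Tendsto (fun m => z m k) atTop (𝓝 (zl k))) :
    ((∃ L, Tendsto (fun m => readNorm r v (z m)) atTop (𝓝 L)) ↔
      (∃ L, Tendsto (fun m => supNorm (z m)) atTop (𝓝 L))) ∧
    (Tendsto (fun m => readNorm r v (z m)) atTop (𝓝 (readNorm r v zl)) ↔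
      Tendsto (fun m => supNorm (z m)) atTop (𝓝 (supNorm zl))) :=
  read_norm_convergence_iff_sup_norm_convergence_general r hrsum v hv1 hv2 z C hbdd zl hconv
end

section
/- Let X, Y be Banach spaces and R : X → Y a bounded linear operator. Define on X the equivalent norm |||x||| = ‖x‖_X + ‖Rx‖_Y. Then the bidual norm of (X, |||·|||) is given by |||x**||| = ‖x**‖_{X**} + ‖R** x**‖_{Y**} for every x** ∈ X**. -/
open Filter Topology NormedSpace

variable {X Y : Type*} [NormedAddCommGroup X] [NormedSpace ℝ X]
  [NormedAddCommGroup Y] [NormedSpace ℝ Y]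

/-- The conjugate (dual) operator `R* : Y* → X*` of a bounded operator `R : X → Y`. -/
noncomputable def conjOp (R : X →L[ℝ] Y) : StrongDual ℝ Y →L[ℝ] StrongDual ℝ X :=
  (ContinuousLinearMap.compL ℝ X Y ℝ).flip R

/-- The biconjugate operator `R** : X** → Y**`. -/
noncomputable def biconjOp (R : X →L[ℝ] Y) : StrongDual ℝ (StrongDual ℝ X) →L[ℝ] StrongDual ℝ (StrongDual ℝ Y) :=
  conjOp (conjOp R)

/-! The dual unit ball of `‖x‖ + ‖R x‖` is `K = {f + R* g : ‖f‖ ≤ 1, ‖g‖ ≤ 1}`: `K` is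
weak*-compact by Banach–Alaoglu, so a functional `h ∉ K` is separated from `K` by a point `x`
of `X`, which after rescaling lies in the renormed unit ball `B` and has `h x > 1`.
Dually, `‖x**‖ + ‖R** x**‖ = sup_{h ∈ K} x** h`, so the right-hand side is the weak*-closed set
`{x** : x** ≤ 1 on K}`, which contains the image of `B`. Conversely, a point `x**` outside the
weak*-closure of the image of `B` is separated from it by some `h ∈ X*` with `h ≤ 1` on `B`; then
`h ∈ K` and `x** h > 1`. -/

section DualNorms

variable {E F : Type*} [NormedAddCommGroup E] [NormedSpace ℝ E]
  [NormedAddCommGroup F] [NormedSpace ℝ F]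

theorem StrongDual.norm_le_of_forall_apply_le (ψ : StrongDual ℝ E) {c : ℝ}
    (h : ∀ e, ‖e‖ ≤ 1 → ψ e ≤ c) : ‖ψ‖ ≤ c := by
  have hc : 0 ≤ c := by simpa using h 0 (by simp)
  refine ψ.opNorm_le_of_unit_norm hc fun e he => abs_le.2 ⟨?_, h e he.le⟩
  linarith [map_neg ψ e, h (-e) (by simp [he])]

theorem norm_le_of_forall_dual_apply_le (e : E) {c : ℝ}
    (h : ∀ f : StrongDual ℝ E, ‖f‖ ≤ 1 → f e ≤ c) : ‖e‖ ≤ c := by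
  obtain ⟨f, hf, hfe⟩ := exists_dual_vector'' ℝ e
  simpa [hfe] using h f hf

theorem StrongDual.apply_le_norm_of_norm_le_one {ψ : StrongDual ℝ E} (hψ : ‖ψ‖ ≤ 1) (e : E) :
    ψ e ≤ ‖e‖ :=
  (le_abs_self _).trans ((ψ.le_opNorm e).trans (mul_le_of_le_one_left (norm_nonneg e) hψ))

theorem StrongDual.apply_le_opNorm_of_norm_le_one (ψ : StrongDual ℝ E) {e : E} (he : ‖e‖ ≤ 1) :
    ψ e ≤ ‖ψ‖ :=
  (le_abs_self _).trans ((ψ.le_opNorm e).trans (mul_le_of_le_one_right (norm_nonneg ψ) he))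

theorem norm_add_norm_le_iff_forall_dual (e : E) (e' : F) (c : ℝ) :
    ‖e‖ + ‖e'‖ ≤ c ↔ ∀ f : StrongDual ℝ E, ‖f‖ ≤ 1 → ∀ g : StrongDual ℝ F, ‖g‖ ≤ 1 →
      f e + g e' ≤ c := by
  refine ⟨fun h f hf g hg => ?_, fun h => ?_⟩
  · linarith [f.apply_le_norm_of_norm_le_one hf e, g.apply_le_norm_of_norm_le_one hg e']
  · have hg : ∀ g : StrongDual ℝ F, ‖g‖ ≤ 1 → ‖e‖ ≤ c - g e' := fun g hg =>
      norm_le_of_forall_dual_apply_le e fun f hf => by linarith [h f hf g hg]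
    linarith [norm_le_of_forall_dual_apply_le e' (c := c - ‖e‖) fun g hg' =>
      by linarith [hg g hg']]

theorem StrongDual.norm_add_norm_le_iff (ψ : StrongDual ℝ E) (ψ' : StrongDual ℝ F) (c : ℝ) :
    ‖ψ‖ + ‖ψ'‖ ≤ c ↔ ∀ e : E, ‖e‖ ≤ 1 → ∀ e' : F, ‖e'‖ ≤ 1 → ψ e + ψ' e' ≤ c := by
  refine ⟨fun h e he e' he' => ?_, fun h => ?_⟩
  · linarith [ψ.apply_le_opNorm_of_norm_le_one he, ψ'.apply_le_opNorm_of_norm_le_one he']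
  · have he' : ∀ e' : F, ‖e'‖ ≤ 1 → ‖ψ‖ ≤ c - ψ' e' := fun e' he' =>
      ψ.norm_le_of_forall_apply_le fun e he => by linarith [h e he e' he']
    linarith [ψ'.norm_le_of_forall_apply_le (c := c - ‖ψ‖) fun e' he'' =>
      by linarith [he' e' he'']]

theorem norm_inclusionInDoubleDual (e : E) : ‖inclusionInDoubleDual ℝ E e‖ = ‖e‖ :=
  (inclusionInDoubleDualLi ℝ).norm_map e

end DualNorms

section WeakDualSeparation

variable {W : Type*} [AddCommGroup W] [TopologicalSpace W] [Module ℝ W]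

instance : LocallyConvexSpace ℝ (WeakDual ℝ W) :=
  WeakBilin.locallyConvexSpace

theorem WeakDual.exists_le_one_lt_of_notMem {C : Set (WeakDual ℝ W)} (hC : Convex ℝ C)
    (hCc : IsClosed C) (h0 : 0 ∈ C) {ψ : WeakDual ℝ W} (hψ : ψ ∉ C) :
    ∃ w : W, (∀ φ ∈ C, φ w ≤ 1) ∧ 1 < ψ w := by
  obtain ⟨ℓ, u, hℓC, huψ⟩ := geometric_hahn_banach_closed_point hC hCc hψ
  -- weak*-continuous functionals on the dual are evaluations
  obtain ⟨w, rfl⟩ := LinearMap.dualEmbedding_surjective (topDualPairing ℝ W) ℓ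
  change ∀ φ ∈ C, φ w < u at hℓC
  change u < ψ w at huψ
  have hu : 0 < u := hℓC 0 h0
  refine ⟨u⁻¹ • w, fun φ hφ => ?_, ?_⟩
  · rw [map_smul, smul_eq_mul, inv_mul_le_iff₀ hu, mul_one]
    exact (hℓC φ hφ).le
  · rw [map_smul, smul_eq_mul, lt_inv_mul_iff₀ hu, mul_one]
    exact huψ

end WeakDualSeparation

section Renorming

variable (R : X →L[ℝ] Y)

@[simp]
theorem conjOp_apply (g : StrongDual ℝ Y) (x : X) : conjOp R g x = g (R x) := rfl

theorem biconjOp_apply (φ : StrongDual ℝ (StrongDual ℝ X)) (g : StrongDual ℝ Y) :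
    biconjOp R φ g = φ (conjOp R g) := rfl

theorem biconjOp_inclusionInDoubleDual (x : X) :
    biconjOp R (inclusionInDoubleDual ℝ X x) = inclusionInDoubleDual ℝ Y (R x) := rfl

theorem convex_setOf_norm_add_norm_apply_le (c : ℝ) :
    Convex ℝ {x : X | ‖x‖ + ‖R x‖ ≤ c} := by
  simpa using ((convexOn_norm convex_univ).add
    ((convexOn_norm convex_univ).comp_linearMap R.toLinearMap)).convex_le c

open Metric in
noncomputable def renormedDualBall : Set (StrongDual ℝ X) :=
  (fun p : StrongDual ℝ X × StrongDual ℝ Y => p.1 + conjOp R p.2) ''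
    closedBall 0 1 ×ˢ closedBall 0 1

theorem forall_mem_renormedDualBall {P : StrongDual ℝ X → Prop} :
    (∀ h ∈ renormedDualBall R, P h) ↔
      ∀ f : StrongDual ℝ X, ‖f‖ ≤ 1 → ∀ g : StrongDual ℝ Y, ‖g‖ ≤ 1 → P (f + conjOp R g) := by
  simp only [renormedDualBall, Set.forall_mem_image, Set.forall_prod_set, Metric.mem_closedBall,
    dist_zero_right]

theorem norm_add_norm_apply_le_one_iff (x : X) :
    ‖x‖ + ‖R x‖ ≤ 1 ↔ ∀ h ∈ renormedDualBall R, h x ≤ 1 := by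
  rw [forall_mem_renormedDualBall, norm_add_norm_le_iff_forall_dual]
  simp

theorem norm_add_norm_biconjOp_le_one_iff (φ : StrongDual ℝ (StrongDual ℝ X)) :
    ‖φ‖ + ‖biconjOp R φ‖ ≤ 1 ↔ ∀ h ∈ renormedDualBall R, φ h ≤ 1 := by
  rw [forall_mem_renormedDualBall, StrongDual.norm_add_norm_le_iff]
  simp [biconjOp_apply]

theorem convex_renormedDualBall : Convex ℝ (renormedDualBall R) :=
  ((convex_closedBall 0 1).prod (convex_closedBall 0 1)).linear_image
    (LinearMap.fst ℝ _ _ + (conjOp R).toLinearMap ∘ₗ LinearMap.snd ℝ _ _)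

theorem isCompact_toStrongDual_preimage_renormedDualBall :
    IsCompact (WeakDual.toStrongDual ⁻¹' renormedDualBall R) := by
  set T : WeakDual ℝ X × WeakDual ℝ Y → WeakDual ℝ X :=
    fun p => p.1 + StrongDual.toWeakDual (conjOp R (WeakDual.toStrongDual p.2))
  have hT : Continuous T := WeakDual.continuous_of_continuous_eval fun x =>
    ((WeakDual.eval_continuous x).comp continuous_fst).add
      ((WeakDual.eval_continuous (R x)).comp continuous_snd)
  have : WeakDual.toStrongDual ⁻¹' renormedDualBall R = T ''
      ((WeakDual.toStrongDual ⁻¹' Metric.closedBall 0 1) ×ˢ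
        (WeakDual.toStrongDual ⁻¹' Metric.closedBall 0 1)) := by
    ext ψ
    simp only [renormedDualBall, T, Set.mem_preimage, Set.mem_image, Set.mem_prod, Prod.exists,
      StrongDual.toWeakDual.surjective.exists, ← map_add, ← StrongDual.symm_toWeakDual,
      LinearEquiv.symm_apply_apply, LinearEquiv.eq_symm_apply]
  exact this ▸
    ((WeakDual.isCompact_closedBall _ _).prod (WeakDual.isCompact_closedBall _ _)).image hT

theorem mem_renormedDualBall_of_forall_le_one {h : StrongDual ℝ X}
    (hh : ∀ x : X, ‖x‖ + ‖R x‖ ≤ 1 → h x ≤ 1) : h ∈ renormedDualBall R := by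
  by_contra hK
  have h0 : (0 : WeakDual ℝ X) ∈ WeakDual.toStrongDual ⁻¹' renormedDualBall R :=
    ⟨(0, 0), by simp, by simp⟩
  obtain ⟨x, hxK, hhx⟩ := WeakDual.exists_le_one_lt_of_notMem
    ((convex_renormedDualBall R).linear_preimage WeakDual.toStrongDual.toLinearMap)
    (isCompact_toStrongDual_preimage_renormedDualBall R).isClosed h0
    (ψ := StrongDual.toWeakDual h) hK
  have hx : ‖x‖ + ‖R x‖ ≤ 1 :=
    (norm_add_norm_apply_le_one_iff R x).2 fun h' hh' => hxK (StrongDual.toWeakDual h') hh'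
  exact (hh x hx).not_gt hhx

theorem isClosed_setOf_norm_add_norm_biconjOp_le_one :
    IsClosed {φ : WeakDual ℝ (StrongDual ℝ X) | ‖WeakDual.toStrongDual φ‖ +
      ‖biconjOp R (WeakDual.toStrongDual φ)‖ ≤ 1} := by
  simp_rw [norm_add_norm_biconjOp_le_one_iff, Set.ofPred_forall]
  exact isClosed_biInter fun h _ => isClosed_le (WeakDual.eval_continuous h) continuous_const

end Renorming

theorem bidual_norm_of_sum_renorming_general
    (R : X →L[ℝ] Y) :
    closure {φ : WeakDual ℝ (StrongDual ℝ X) | ∃ x : X, ‖x‖ + ‖R x‖ ≤ 1 ∧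
        φ = StrongDual.toWeakDual (inclusionInDoubleDual ℝ X x)} =
      {φ : WeakDual ℝ (StrongDual ℝ X) | ‖WeakDual.toStrongDual φ‖ +
        ‖biconjOp R (WeakDual.toStrongDual φ)‖ ≤ 1} := by
  set C := {φ : WeakDual ℝ (StrongDual ℝ X) | ∃ x : X, ‖x‖ + ‖R x‖ ≤ 1 ∧
    φ = StrongDual.toWeakDual (inclusionInDoubleDual ℝ X x)}
  refine (closure_minimal ?_ (isClosed_setOf_norm_add_norm_biconjOp_le_one R)).antisymm
    fun φ hφ => ?_
  · rintro _ ⟨x, hx, rfl⟩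
    simpa only [Set.mem_ofPred_eq, StrongDual.toStrongDual_toWeakDual,
      biconjOp_inclusionInDoubleDual, norm_inclusionInDoubleDual] using hx
  by_contra hφC
  have hC : Convex ℝ C := by
    convert (convex_setOf_norm_add_norm_apply_le R 1).linear_image
      (StrongDual.toWeakDual.toLinearMap ∘ₗ (inclusionInDoubleDual ℝ X).toLinearMap) using 1
    ext
    simp [C, eq_comm]
  obtain ⟨h, hCh, hφh⟩ := WeakDual.exists_le_one_lt_of_notMem hC.closure isClosed_closure
    (subset_closure (s := C) ⟨0, by simp, by simp⟩) hφC
  have hK := mem_renormedDualBall_of_forall_le_one R fun x hx =>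
    hCh _ (subset_closure ⟨x, hx, rfl⟩)
  exact hφh.not_ge ((norm_add_norm_biconjOp_le_one_iff R _).1 hφ h hK)

/-- Let `X, Y` be Banach spaces, `R : X → Y` a bounded operator, and equip `X` with the
equivalent norm `|||x||| = ‖x‖ + ‖Rx‖`.  Then the bidual norm on `X**` is
`|||x**||| = ‖x**‖ + ‖R** x**‖`.  By Goldstine's theorem this is expressed by saying
that the weak*-closure in `X**` of the canonical image of the `|||·|||`-unit ball
`B = {x : ‖x‖ + ‖Rx‖ ≤ 1}` is exactly `{x** : ‖x**‖ + ‖R** x**‖ ≤ 1}`. -/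
theorem bidual_norm_of_sum_renorming
    [CompleteSpace X] [CompleteSpace Y] (R : X →L[ℝ] Y) :
    closure {φ : WeakDual ℝ (StrongDual ℝ X) | ∃ x : X, ‖x‖ + ‖R x‖ ≤ 1 ∧
        φ = StrongDual.toWeakDual (inclusionInDoubleDual ℝ X x)} =
      {φ : WeakDual ℝ (StrongDual ℝ X) | ‖WeakDual.toStrongDual φ‖ +
        ‖biconjOp R (WeakDual.toStrongDual φ)‖ ≤ 1} :=
  bidual_norm_of_sum_renorming_general R
end

section
/- In the setting of the previous proposition, the set A₀ = {x** ∈ X** : ‖x**‖ + ‖R**x**‖ < 1} is contained in the weak*-closure of the canonical image of B = {x ∈ X : ‖x‖ + ‖Rx‖ ≤ 1}. -/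
/-!
If `φ` lies outside the weak*-closure of the image of `B`, a weak*-continuous functional, that is
an element `f ∈ X*`, separates `φ` from it; after scaling, `f x ≤ ‖x‖ + ‖R x‖` on `X` while
`φ f > 1`. Hahn–Banach on the graph of `R` inside `X × Y`, normed by `‖x‖ + ‖y‖`, splits
`f = g + R* h` with `‖g‖, ‖h‖ ≤ 1`, so `φ f = φ g + (R** φ) h ≤ ‖φ‖ + ‖R** φ‖ < 1`.
-/

open Filter Topology NormedSpace

variable {X Y : Type*} [NormedAddCommGroup X] [NormedSpace ℝ X]
  [NormedAddCommGroup Y] [NormedSpace ℝ Y]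

theorem Seminorm.le_of_forall_closedBall_le_one {E : Type*} [AddCommGroup E] [Module ℝ E]
    (p : Seminorm ℝ E) (f : E →ₗ[ℝ] ℝ) (hf : ∀ x ∈ p.closedBall 0 1, f x ≤ 1) (x : E) :
    f x ≤ p x := by
  have hbound : ∀ t > p x, f x ≤ t := fun t ht => by
    have ht₀ : 0 < t := (apply_nonneg p x).trans_lt ht
    have hx : t⁻¹ • x ∈ p.closedBall 0 1 := by
      rw [mem_closedBall_zero, map_smul_eq_mul, Real.norm_eq_abs, abs_of_pos (inv_pos.2 ht₀),
        inv_mul_le_one₀ ht₀]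
      exact ht.le
    simpa [map_smul, inv_mul_le_one₀ ht₀] using hf _ hx
  exact le_of_forall_gt_imp_ge_of_dense hbound

instance WeakDual.instLocallyConvexSpace {E : Type*} [AddCommGroup E] [TopologicalSpace E]
    [Module ℝ E] : LocallyConvexSpace ℝ (WeakDual ℝ E) :=
  WeakBilin.locallyConvexSpace

theorem WeakDual.exists_forall_apply_eq {𝕜 E : Type*} [NontriviallyNormedField 𝕜] [AddCommGroup E]
    [TopologicalSpace E] [Module 𝕜 E] (L : StrongDual 𝕜 (WeakDual 𝕜 E)) :
    ∃ f : E, ∀ φ : WeakDual 𝕜 E, L φ = φ f := by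
  obtain ⟨f, hf⟩ := LinearMap.dualEmbedding_surjective (topDualPairing 𝕜 E) L
  exact ⟨f, fun φ => by rw [← hf]; rfl⟩

namespace ContinuousLinearMap

variable (R : X →L[ℝ] Y)

noncomputable def graphSeminorm : Seminorm ℝ X :=
  normSeminorm ℝ X + (normSeminorm ℝ Y).comp R.toLinearMap

@[simp]
theorem graphSeminorm_apply (x : X) : R.graphSeminorm x = ‖x‖ + ‖R x‖ := rfl

end ContinuousLinearMap

theorem exists_eq_add_conjOp_of_le_graphSeminorm (R : X →L[ℝ] Y) (f : StrongDual ℝ X)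
    (hf : ∀ x, f x ≤ R.graphSeminorm x) :
    ∃ (g : StrongDual ℝ X) (h : StrongDual ℝ Y), ‖g‖ ≤ 1 ∧ ‖h‖ ≤ 1 ∧ f = g + conjOp R h := by
  let p : Seminorm ℝ (X × Y) := (normSeminorm ℝ X).comp (LinearMap.fst ℝ X Y) +
    (normSeminorm ℝ Y).comp (LinearMap.snd ℝ X Y)
  let G := LinearMap.graph (R : X →ₗ[ℝ] Y)
  obtain ⟨F, hFG, hFp⟩ := Module.Dual.exists_extension_of_le_seminorm_real G
    ((f : X →ₗ[ℝ] ℝ) ∘ₗ LinearMap.fst ℝ X Y ∘ₗ G.subtype) (p := p) fun z => by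
      obtain ⟨⟨x, y⟩, hz⟩ := z
      have hy : y = R x := (LinearMap.mem_graph_iff _ _).1 hz
      subst hy
      exact hf x
  refine ⟨(F ∘ₗ LinearMap.inl ℝ X Y).mkContinuous 1 fun x => by simpa [p] using hFp (x, 0),
    (F ∘ₗ LinearMap.inr ℝ X Y).mkContinuous 1 fun y => by simpa [p] using hFp (0, y),
    LinearMap.mkContinuous_norm_le _ zero_le_one _,
    LinearMap.mkContinuous_norm_le _ zero_le_one _, ?_⟩
  ext x
  have hx : F (x, R x) = f x := hFG ⟨(x, R x), (LinearMap.mem_graph_iff _ _).2 rfl⟩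
  have hsplit : F (x, R x) = F (x, 0) + F (0, R x) := by rw [← map_add]; simp
  simpa [conjOp, hsplit] using hx.symm

theorem apply_le_norm_add_norm_biconjOp (R : X →L[ℝ] Y) (Φ : StrongDual ℝ (StrongDual ℝ X))
    {f : StrongDual ℝ X} (hf : ∀ x, f x ≤ R.graphSeminorm x) :
    Φ f ≤ ‖Φ‖ + ‖biconjOp R Φ‖ := by
  obtain ⟨g, h, hg, hh, rfl⟩ := exists_eq_add_conjOp_of_le_graphSeminorm R f hf
  calc Φ (g + conjOp R h) = Φ g + biconjOp R Φ h := map_add Φ g _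
    _ ≤ ‖Φ g‖ + ‖biconjOp R Φ h‖ := add_le_add (Real.le_norm_self _) (Real.le_norm_self _)
    _ ≤ ‖Φ‖ + ‖biconjOp R Φ‖ := add_le_add
      ((Φ.le_opNorm_of_le hg).trans_eq (mul_one _))
      (((biconjOp R Φ).le_opNorm_of_le hh).trans_eq (mul_one _))

theorem strict_ball_subset_weak_star_closure_general
    (R : X →L[ℝ] Y) :
    {φ : WeakDual ℝ (StrongDual ℝ X) | ‖WeakDual.toStrongDual φ‖ +
        ‖biconjOp R (WeakDual.toStrongDual φ)‖ < 1} ⊆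
      closure {φ : WeakDual ℝ (StrongDual ℝ X) | ∃ x : X, ‖x‖ + ‖R x‖ ≤ 1 ∧
        φ = StrongDual.toWeakDual (inclusionInDoubleDual ℝ X x)} := by
  intro φ hφ
  by_contra hφB
  have hconv : Convex ℝ {φ : WeakDual ℝ (StrongDual ℝ X) | ∃ x : X, ‖x‖ + ‖R x‖ ≤ 1 ∧
      φ = StrongDual.toWeakDual (inclusionInDoubleDual ℝ X x)} := by
    rintro _ ⟨x₁, hx₁, rfl⟩ _ ⟨x₂, hx₂, rfl⟩ a b ha hb hab
    refine ⟨a • x₁ + b • x₂, ?_, by simp⟩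
    simpa using R.graphSeminorm.convex_closedBall 0 1 (by simpa using hx₁) (by simpa using hx₂)
      ha hb hab
  obtain ⟨L, u, hLB, hLφ⟩ := geometric_hahn_banach_closed_point hconv.closure isClosed_closure hφB
  obtain ⟨f, hL⟩ := WeakDual.exists_forall_apply_eq L
  have hu : 0 < u := by simpa using hLB 0 (subset_closure ⟨0, by simp, by simp⟩)
  have hf : ∀ x, (u⁻¹ • f) x ≤ R.graphSeminorm x :=
    R.graphSeminorm.le_of_forall_closedBall_le_one (u⁻¹ • f : StrongDual ℝ X) fun x hx => by
      have hfx : f x < u := by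
        simpa [hL] using hLB _ (subset_closure ⟨x, by simpa using hx, rfl⟩)
      simpa [inv_mul_le_one₀ hu] using hfx.le
  have hφf : φ (u⁻¹ • f) < 1 :=
    (apply_le_norm_add_norm_biconjOp R (WeakDual.toStrongDual φ) hf).trans_lt hφ
  rw [map_smul, smul_eq_mul, inv_mul_lt_one₀ hu, ← hL] at hφf
  exact hφf.not_gt hLφ

/-- The set `A₀ = {x** : ‖x**‖ + ‖R** x**‖ < 1}` is contained in the weak*-closure of the
canonical image of `B = {x : ‖x‖ + ‖Rx‖ ≤ 1}`. -/
theorem strict_ball_subset_weak_star_closure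
    [CompleteSpace X] [CompleteSpace Y] (R : X →L[ℝ] Y) :
    {φ : WeakDual ℝ (StrongDual ℝ X) | ‖WeakDual.toStrongDual φ‖ +
        ‖biconjOp R (WeakDual.toStrongDual φ)‖ < 1} ⊆
      closure {φ : WeakDual ℝ (StrongDual ℝ X) | ∃ x : X, ‖x‖ + ‖R x‖ ≤ 1 ∧
        φ = StrongDual.toWeakDual (inclusionInDoubleDual ℝ X x)} :=
  strict_ball_subset_weak_star_closure_general R
end

section
/- If X is a Banach space such that X** is strictly convex, then for every closed subspace Y ⊆ X the quotient X/Y is strictly convex. -/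
open NormedSpace

set_option maxHeartbeats 2000000 in
/-- If the bidual `X**` of a Banach space `X` is strictly convex, then every quotient
`X / Y` of `X` by a closed subspace `Y` is strictly convex. -/
theorem quotient_strictConvex_of_bidual_strictConvex
    (X : Type*) [NormedAddCommGroup X] [NormedSpace ℝ X] [CompleteSpace X]
    (h : StrictConvexSpace ℝ (StrongDual ℝ (StrongDual ℝ X)))
    (Y : Submodule ℝ X) (hY : IsClosed (Y : Set X)) :
    letI : NormedAddCommGroup (X ⧸ Y) := @Submodule.Quotient.normedAddCommGroup X _ ℝ _ _ Y hY
    letI : NormedSpace ℝ (X ⧸ Y) := Submodule.Quotient.normedSpace Y ℝ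
    StrictConvexSpace ℝ (X ⧸ Y) := by
  letI : NormedAddCommGroup (X ⧸ Y) := @Submodule.Quotient.normedAddCommGroup X _ ℝ _ _ Y hY
  letI : NormedSpace ℝ (X ⧸ Y) := Submodule.Quotient.normedSpace Y ℝ
  -- the continuous quotient map
  let π : X →L[ℝ] X ⧸ Y :=
    LinearMap.mkContinuous Y.mkQ 1 (fun x => by
      simpa using Submodule.Quotient.norm_mk_le Y x)
  have hπ_surj : Function.Surjective π := Submodule.mkQ_surjective Y
  -- composition with π is an isometric embedding of duals
  have hnorm_comp : ∀ p : StrongDual ℝ (X ⧸ Y), ‖p.comp π‖ = ‖p‖ := by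
    intro p
    refine le_antisymm ?_ ?_
    · refine ContinuousLinearMap.opNorm_le_bound _ (norm_nonneg p) fun x => ?_
      calc ‖p (π x)‖ ≤ ‖p‖ * ‖π x‖ := p.le_opNorm _
        _ ≤ ‖p‖ * ‖x‖ := by
            refine mul_le_mul_of_nonneg_left ?_ (norm_nonneg p)
            exact Submodule.Quotient.norm_mk_le Y x
    · refine ContinuousLinearMap.opNorm_le_bound _ (norm_nonneg _) fun z => ?_
      refine le_of_forall_pos_le_add fun ε hε => ?_
      have hε' : 0 < ε / (‖p.comp π‖ + 1) := by positivity
      obtain ⟨m, hm, hmlt⟩ := Submodule.Quotient.norm_mk_lt z hε'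
      have hz : π m = z := hm
      calc ‖p z‖ = ‖(p.comp π) m‖ := by rw [ContinuousLinearMap.comp_apply, hz]
        _ ≤ ‖p.comp π‖ * ‖m‖ := (p.comp π).le_opNorm m
        _ ≤ ‖p.comp π‖ * (‖z‖ + ε / (‖p.comp π‖ + 1)) := by
            exact mul_le_mul_of_nonneg_left hmlt.le (norm_nonneg _)
        _ = ‖p.comp π‖ * ‖z‖ + ‖p.comp π‖ * (ε / (‖p.comp π‖ + 1)) := by ring
        _ ≤ ‖p.comp π‖ * ‖z‖ + ε := by
            refine add_le_add le_rfl ?_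
            rw [mul_div_assoc']
            rw [div_le_iff₀ (by positivity)]
            nlinarith [norm_nonneg (p.comp π), hε.le]
  -- the embedding of duals as a linear map
  let D : StrongDual ℝ (X ⧸ Y) →ₗ[ℝ] StrongDual ℝ X :=
    { toFun := fun p => p.comp π
      map_add' := fun p q => ContinuousLinearMap.add_comp _ _ _
      map_smul' := fun c p => ContinuousLinearMap.smul_comp _ _ _ }
  have hD_inj : Function.Injective D := by
    intro p q hpq
    ext z
    obtain ⟨x, rfl⟩ := hπ_surj z
    have := congrArg (fun (f : StrongDual ℝ X) => f x) hpq
    exact this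
  let e : StrongDual ℝ (X ⧸ Y) ≃ₗ[ℝ] LinearMap.range D := LinearEquiv.ofInjective D hD_inj
  have he_symm : ∀ p : StrongDual ℝ (X ⧸ Y), e.symm (e p) = p := fun p => e.symm_apply_apply p
  have he_coe : ∀ p : StrongDual ℝ (X ⧸ Y), ((e p : LinearMap.range D) : StrongDual ℝ X) = D p :=
    fun p => rfl
  -- evaluation functionals on the range of D, extended to all of X* by Hahn-Banach
  have key : ∀ z : X ⧸ Y, ‖z‖ = 1 → ∃ Φ : StrongDual ℝ (StrongDual ℝ X),
      ‖Φ‖ ≤ 1 ∧ ∀ p : StrongDual ℝ (X ⧸ Y), Φ (D p) = p z := by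
    intro z hz
    let ev : (LinearMap.range D) →ₗ[ℝ] ℝ :=
      { toFun := fun w => (e.symm w) z
        map_add' := fun a b => by simp [map_add]
        map_smul' := fun c a => by simp [map_smul] }
    have hev_bound : ∀ w : LinearMap.range D, ‖ev w‖ ≤ 1 * ‖w‖ := by
      intro w
      have hw : ((e (e.symm w) : LinearMap.range D) : StrongDual ℝ X) = (w : StrongDual ℝ X) := by
        rw [e.apply_symm_apply]
      have hw' : D (e.symm w) = (w : StrongDual ℝ X) := by rw [← he_coe, hw]
      have : ‖(w : StrongDual ℝ X)‖ = ‖e.symm w‖ := by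
        rw [← hw']; exact hnorm_comp _
      calc ‖ev w‖ ≤ ‖e.symm w‖ * ‖z‖ := (e.symm w).le_opNorm z
        _ = 1 * ‖w‖ := by
            rw [hz, mul_one, one_mul, ← this]
            rfl
    let evC : (LinearMap.range D) →L[ℝ] ℝ := LinearMap.mkContinuous (𝕜 := ℝ) (E := LinearMap.range D) (F := ℝ) ev 1 hev_bound
    obtain ⟨Φ, hΦ_ext, hΦ_norm⟩ := exists_extension_norm_eq (LinearMap.range D) evC
    refine ⟨Φ, ?_, ?_⟩
    · rw [hΦ_norm]
      have h1 := LinearMap.mkContinuous_norm_le (𝕜 := ℝ) (E := LinearMap.range D) (F := ℝ) ev zero_le_one hev_bound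
      exact h1
    · intro p
      have hmem : D p ∈ LinearMap.range D := LinearMap.mem_range_self D p
      have := hΦ_ext ⟨D p, hmem⟩
      rw [this]
      show ev ⟨D p, hmem⟩ = p z
      have : (⟨D p, hmem⟩ : LinearMap.range D) = e p := rfl
      rw [this]
      show (e.symm (e p)) z = p z
      rw [he_symm]
  -- main argument
  refine StrictConvexSpace.of_norm_add_ne_two fun z₁ z₂ h₁ h₂ hne hsum => ?_
  have hz12 : z₁ + z₂ ≠ 0 := by
    intro h0
    rw [h0, norm_zero] at hsum
    norm_num at hsum
  obtain ⟨f, hf1, hfval⟩ := exists_dual_vector ℝ (z₁ + z₂) (norm_ne_zero_iff.mpr hz12)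
  rw [hsum] at hfval
  have hf₁le : f z₁ ≤ 1 := by
    calc f z₁ ≤ ‖f z₁‖ := le_abs_self _
      _ ≤ ‖f‖ * ‖z₁‖ := f.le_opNorm _
      _ = 1 := by rw [hf1, h₁, mul_one]
  have hf₂le : f z₂ ≤ 1 := by
    calc f z₂ ≤ ‖f z₂‖ := le_abs_self _
      _ ≤ ‖f‖ * ‖z₂‖ := f.le_opNorm _
      _ = 1 := by rw [hf1, h₂, mul_one]
  have hfsum : f z₁ + f z₂ = 2 := by
    have := hfval
    rw [map_add] at this
    exact_mod_cast this
  have hf₁ : f z₁ = 1 := by linarith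
  have hf₂ : f z₂ = 1 := by linarith
  obtain ⟨Φ₁, hΦ₁le, hΦ₁⟩ := key z₁ h₁
  obtain ⟨Φ₂, hΦ₂le, hΦ₂⟩ := key z₂ h₂
  have hDf : ‖D f‖ = 1 := by
    show ‖f.comp π‖ = 1
    rw [hnorm_comp, hf1]
  have hΦ₁Df : Φ₁ (D f) = 1 := by rw [hΦ₁ f, hf₁]
  have hΦ₂Df : Φ₂ (D f) = 1 := by rw [hΦ₂ f, hf₂]
  have hΦ₁norm : ‖Φ₁‖ = 1 := by
    refine le_antisymm hΦ₁le ?_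
    calc (1 : ℝ) = Φ₁ (D f) := hΦ₁Df.symm
      _ ≤ ‖Φ₁ (D f)‖ := le_abs_self _
      _ ≤ ‖Φ₁‖ * ‖D f‖ := Φ₁.le_opNorm _
      _ = ‖Φ₁‖ := by rw [hDf, mul_one]
  have hΦ₂norm : ‖Φ₂‖ = 1 := by
    refine le_antisymm hΦ₂le ?_
    calc (1 : ℝ) = Φ₂ (D f) := hΦ₂Df.symm
      _ ≤ ‖Φ₂ (D f)‖ := le_abs_self _
      _ ≤ ‖Φ₂‖ * ‖D f‖ := Φ₂.le_opNorm _
      _ = ‖Φ₂‖ := by rw [hDf, mul_one]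
  have hsumnorm : ‖Φ₁ + Φ₂‖ = ‖Φ₁‖ + ‖Φ₂‖ := by
    refine le_antisymm (norm_add_le Φ₁ Φ₂) ?_
    rw [hΦ₁norm, hΦ₂norm]
    calc (1 : ℝ) + 1 = (Φ₁ + Φ₂) (D f) := by
          rw [ContinuousLinearMap.add_apply, hΦ₁Df, hΦ₂Df]
      _ ≤ ‖(Φ₁ + Φ₂) (D f)‖ := le_abs_self _
      _ ≤ ‖Φ₁ + Φ₂‖ * ‖D f‖ := (Φ₁ + Φ₂).le_opNorm _
      _ = ‖Φ₁ + Φ₂‖ := by rw [hDf, mul_one]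
  have hΦeq : Φ₁ = Φ₂ := by
    haveI := h
    exact eq_of_norm_eq_of_norm_add_eq (by rw [hΦ₁norm, hΦ₂norm]) hsumnorm
  -- but Φ₁ ≠ Φ₂: find a functional separating z₁ and z₂
  have hzne : z₁ - z₂ ≠ 0 := sub_ne_zero_of_ne hne
  obtain ⟨g, hg1, hgval⟩ := exists_dual_vector ℝ (z₁ - z₂) (norm_ne_zero_iff.mpr hzne)
  have hgne : g z₁ ≠ g z₂ := by
    intro hgeq
    have : g (z₁ - z₂) = 0 := by rw [map_sub, hgeq, sub_self]
    rw [this] at hgval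
    have : ‖z₁ - z₂‖ = 0 := by exact_mod_cast hgval.symm
    exact hzne (norm_eq_zero.mp this)
  apply hgne
  calc g z₁ = Φ₁ (D g) := (hΦ₁ g).symm
    _ = Φ₂ (D g) := by rw [hΦeq]
    _ = g z₂ := hΦ₂ g
end

section
/- Let (u_m) be a bounded sequence in ℓ∞ converging coordinate-wise to 0 such that lim_m ‖u_m‖_∞ exists. Then for every u ∈ c₀, lim_m ‖u + u_m‖_∞ = max{‖u‖_∞, lim_m ‖u_m‖_∞}. -/
open Filter Topology

lemma supNorm_le' {x : ℕ → ℝ} {B : ℝ} (hB : ∀ k, |x k| ≤ B) : supNorm x ≤ B :=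
  ciSup_le hB

lemma le_supNorm' {x : ℕ → ℝ} {B : ℝ} (hB : ∀ k, |x k| ≤ B) (k : ℕ) :
    |x k| ≤ supNorm x :=
  le_ciSup ⟨B, by rintro _ ⟨j, rfl⟩; exact hB j⟩ k

/-- Let `(u_m)` be a bounded sequence in `ℓ∞` converging coordinate-wise to `0` such
that `lim_m ‖u_m‖_∞` exists.  Then for every `u ∈ c₀`,
`lim_m ‖u + u_m‖_∞ = max {‖u‖_∞, lim_m ‖u_m‖_∞}`. -/
theorem sup_norm_limit_of_c0_plus_weak_star_null
    (um : ℕ → ℕ → ℝ) (C : ℝ) (hbdd : ∀ m k, |um m k| ≤ C)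
    (hw : ∀ k, Tendsto (fun m => um m k) atTop (𝓝 0))
    (L : ℝ) (hL : Tendsto (fun m => supNorm (um m)) atTop (𝓝 L))
    (u : ℕ → ℝ) (hu : Tendsto u atTop (𝓝 0)) :
    Tendsto (fun m => supNorm (fun k => u k + um m k)) atTop
      (𝓝 (max (supNorm u) L)) := by
  -- a bound for u
  obtain ⟨D, hD⟩ : ∃ D, ∀ k, |u k| ≤ D := by
    obtain ⟨D, hD⟩ := (hu.abs.bddAbove_range)
    exact ⟨D, fun k => hD (Set.mem_range_self k)⟩
  have husup : ∀ k, |u k| ≤ supNorm u := le_supNorm' hD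
  have husup0 : 0 ≤ supNorm u := le_trans (abs_nonneg _) (husup 0)
  set M := max (supNorm u) L with hM
  rw [Metric.tendsto_atTop]
  intro ε hε
  have hε6 : 0 < ε / 6 := by positivity
  -- tail of u small
  obtain ⟨N, hN⟩ := (Metric.tendsto_atTop.1 hu) (ε / 6) hε6
  have hN' : ∀ k ≥ N, |u k| < ε / 6 := by
    intro k hk
    have := hN k hk
    rwa [Real.dist_eq, sub_zero] at this
  -- witness near sup of u
  obtain ⟨k₀, hk₀⟩ : ∃ k₀, supNorm u - ε / 6 < |u k₀| := by
    have h : supNorm u - ε / 6 < ⨆ k, |u k| := by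
      have : (⨆ k, |u k|) = supNorm u := rfl
      rw [this]; linarith
    exact exists_lt_of_lt_ciSup h
  -- eventually facts
  have E1 : ∀ᶠ m in atTop, |um m k₀| < ε / 6 := by
    have := (Metric.tendsto_atTop.1 (hw k₀)) (ε / 6) hε6
    obtain ⟨M1, hM1⟩ := this
    refine eventually_atTop.2 ⟨M1, fun m hm => ?_⟩
    have := hM1 m hm
    rwa [Real.dist_eq, sub_zero] at this
  have E2 : ∀ᶠ m in atTop, |supNorm (um m) - L| < ε / 6 := by
    obtain ⟨M2, hM2⟩ := (Metric.tendsto_atTop.1 hL) (ε / 6) hε6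
    refine eventually_atTop.2 ⟨M2, fun m hm => ?_⟩
    have := hM2 m hm
    rwa [Real.dist_eq] at this
  have E3 : ∀ᶠ m in atTop, ∀ k ∈ Finset.range N, |um m k| < ε / 6 := by
    rw [eventually_all_finset]
    intro k _
    obtain ⟨M3, hM3⟩ := (Metric.tendsto_atTop.1 (hw k)) (ε / 6) hε6
    refine eventually_atTop.2 ⟨M3, fun m hm => ?_⟩
    have := hM3 m hm
    rwa [Real.dist_eq, sub_zero] at this
  obtain ⟨M0, hM0⟩ := eventually_atTop.1 ((E1.and E2).and E3)
  refine ⟨M0, fun m hm => ?_⟩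
  obtain ⟨⟨h1, h2⟩, h3⟩ := hM0 m hm
  have h3' : ∀ k < N, |um m k| < ε / 6 := fun k hk => h3 k (Finset.mem_range.2 hk)
  have humsup : ∀ k, |um m k| ≤ supNorm (um m) := le_supNorm' (hbdd m)
  -- upper bound
  have hupper : supNorm (fun k => u k + um m k) ≤ M + 2 * (ε / 6) := by
    apply supNorm_le'
    intro k
    have habs : |u k + um m k| ≤ |u k| + |um m k| := abs_add_le _ _
    rcases lt_or_ge k N with hk | hk
    · have := h3' k hk
      have hMu : supNorm u ≤ M := le_max_left _ _
      linarith [husup k]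
    · have h1' : |u k| < ε / 6 := hN' k hk
      have h2' : supNorm (um m) < L + ε / 6 := by
        have := abs_sub_lt_iff.1 h2
        linarith [this.1]
      have hML : L ≤ M := le_max_right _ _
      linarith [humsup k]
  -- lower bound part 1: from ‖u‖
  have hlow1 : supNorm u - 2 * (ε / 6) < supNorm (fun k => u k + um m k) := by
    have key : |u k₀| - |um m k₀| ≤ |u k₀ + um m k₀| := by
      have := abs_sub_abs_le_abs_sub (u k₀) (-(um m k₀))
      simpa [sub_neg_eq_add] using this
    have hle : |u k₀ + um m k₀| ≤ supNorm (fun k => u k + um m k) :=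
      le_supNorm' (x := fun k => u k + um m k)
        (fun k => le_trans (abs_add_le _ _) (add_le_add (hD k) (hbdd m k))) k₀
    linarith
  -- lower bound
  have hlow : M - 5 * (ε / 6) < supNorm (fun k => u k + um m k) := by
    obtain ⟨k₁, hk₁⟩ : ∃ k₁, supNorm (um m) - ε / 6 < |um m k₁| := by
      have h : supNorm (um m) - ε / 6 < ⨆ k, |um m k| := by
        have : (⨆ k, |um m k|) = supNorm (um m) := rfl
        rw [this]; linarith
      exact exists_lt_of_lt_ciSup h
    have hLlow : L - ε / 6 < supNorm (um m) := by
      have := abs_sub_lt_iff.1 h2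
      linarith [this.2]
    rcases lt_or_ge k₁ N with hk | hk
    · -- then L is small, use part 1
      have : |um m k₁| < ε / 6 := h3' k₁ hk
      have hLsmall : L < 3 * (ε / 6) := by linarith
      have hMle : M < supNorm u + 3 * (ε / 6) := by
        rcases max_cases (supNorm u) L with ⟨h, _⟩ | ⟨h, _⟩ <;> rw [hM, h] <;> linarith
      linarith
    · have hu1 : |u k₁| < ε / 6 := hN' k₁ hk
      have key : |um m k₁| - |u k₁| ≤ |u k₁ + um m k₁| := by
        have := abs_sub_abs_le_abs_sub (um m k₁) (-(u k₁))
        simpa [sub_neg_eq_add, add_comm] using this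
      have hle : |u k₁ + um m k₁| ≤ supNorm (fun k => u k + um m k) :=
        le_supNorm' (x := fun k => u k + um m k)
          (fun k => le_trans (abs_add_le _ _) (add_le_add (hD k) (hbdd m k))) k₁
      have hLpart : L - 3 * (ε / 6) < supNorm (fun k => u k + um m k) := by linarith
      rcases max_cases (supNorm u) L with ⟨h, _⟩ | ⟨h, _⟩ <;> rw [hM, h] <;> linarith
  rw [Real.dist_eq, abs_sub_lt_iff]
  constructor <;> linarith
end

section
/- Read's space ℛ is not locally uniformly rotund: there exist x in the unit sphere of ℛ and a sequence (y_m) in the unit sphere with |||x + y_m||| → 2 but |||y_m − x||| not converging to 0. -/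
open Filter Topology NormedSpace

/-- two-point sequence -/
noncomputable def RW (α β : ℝ) (j : ℕ) : ℕ → ℝ :=
  fun k => if k = 0 then α else if k = j then β else 0

lemma RW_bdd (α β : ℝ) (j : ℕ) : BddAbove (Set.range fun k => |RW α β j k|) := by
  refine ⟨max |α| |β|, ?_⟩
  rintro _ ⟨k, rfl⟩
  beta_reduce
  unfold RW
  split_ifs <;> simp [le_max_iff, abs_nonneg, le_refl]

lemma RW_supNorm (α β : ℝ) (j : ℕ) (hj : j ≠ 0) : supNorm (RW α β j) = max |α| |β| := by
  unfold supNorm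
  apply le_antisymm
  · apply ciSup_le
    intro k
    beta_reduce
    unfold RW
    split_ifs <;> simp [le_max_iff, abs_nonneg, le_refl]
  · rcases le_total |α| |β| with h | h
    · rw [max_eq_right h]
      refine le_trans (le_of_eq ?_) (le_ciSup (RW_bdd α β j) j)
      simp [RW, hj]
    · rw [max_eq_left h]
      refine le_trans (le_of_eq ?_) (le_ciSup (RW_bdd α β j) 0)
      simp [RW]

lemma RW_pairing (α β : ℝ) (j : ℕ) (hj : j ≠ 0) (u : ℕ → ℝ) :
    pairing (RW α β j) u = α * u 0 + β * u j := by
  unfold pairing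
  rw [tsum_eq_sum (s := {0, j}) (by
    intro k hk
    simp only [Finset.mem_insert, Finset.mem_singleton, not_or] at hk
    simp [RW, hk.1, hk.2])]
  rw [Finset.sum_insert (by simpa using Ne.symm hj), Finset.sum_singleton]
  simp [RW, hj]

lemma RW_readNorm (r : ℕ → ℝ) (v : ℕ → ℕ → ℝ) (α β : ℝ) (j : ℕ) (hj : j ≠ 0) :
    readNorm r v (RW α β j) = max |α| |β| + ∑' n, r n * |α * v n 0 + β * v n j| := by
  unfold readNorm
  rw [RW_supNorm α β j hj]
  congr 1
  exact tsum_congr fun n => by rw [RW_pairing α β j hj]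

lemma RW_add (α β γ δ : ℝ) (j : ℕ) : RW α β j + RW γ δ j = RW (α + γ) (β + δ) j := by
  funext k
  simp only [Pi.add_apply, RW]
  split_ifs <;> ring

lemma RW_sub (α β γ δ : ℝ) (j : ℕ) : RW α β j - RW γ δ j = RW (α - γ) (β - δ) j := by
  funext k
  simp only [Pi.sub_apply, RW]
  split_ifs <;> ring

lemma RW_smul (t α β : ℝ) (j : ℕ) : t • RW α β j = RW (t * α) (t * β) j := by
  funext k
  simp only [Pi.smul_apply, smul_eq_mul, RW]
  split_ifs <;> ring

lemma RW_zero_snd (α : ℝ) (j j' : ℕ) : RW α 0 j = RW α 0 j' := by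
  funext k
  simp only [RW]
  split_ifs <;> rfl

lemma RW_tendsto (α β : ℝ) (j : ℕ) : Tendsto (RW α β j) atTop (𝓝 0) := by
  refine tendsto_const_nhds.congr' ?_
  filter_upwards [eventually_ge_atTop (j + 1)] with k hk
  simp only [RW]
  rw [if_neg (by omega), if_neg (by omega)]

/-- Read's space `ℛ` is not locally uniformly rotund: there exist `x` in the unit
sphere of `ℛ` and a sequence `(y_m)` in the unit sphere with `|||x + y_m||| → 2` but
`|||y_m − x|||` not converging to `0`. -/
theorem read_space_not_LUR
    (r : ℕ → ℝ) (hrpos : ∀ n, 0 < r n) (hrsum : Summable r) (hr2 : ∑' n, r n ≤ 2)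
    (v : ℕ → ℕ → ℝ) (hv1 : ∀ n, Summable fun k => |v n k|)
    (hv2 : ∀ n, ∑' k, |v n k| = 1)
    (hdense : ∀ w : ℕ → ℝ, (Summable fun k => |w k|) → ∑' k, |w k| = 1 →
      ∀ ε > 0, ∃ n, ∑' k, |w k - v n k| < ε)
    (X : Type*) [NormedAddCommGroup X] [NormedSpace ℝ X]
    (e : X →ₗ[ℝ] (ℕ → ℝ)) (hinj : Function.Injective e)
    (hc0 : ∀ x, Tendsto (e x) atTop (𝓝 0))
    (hsurj : ∀ f : ℕ → ℝ, Tendsto f atTop (𝓝 0) → ∃ x, e x = f)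
    (hnorm : ∀ x, ‖x‖ = readNorm r v (e x)) :
    ∃ x : X, ‖x‖ = 1 ∧ ∃ y : ℕ → X, (∀ m, ‖y m‖ = 1) ∧
      Tendsto (fun m => ‖x + y m‖) atTop (𝓝 2) ∧
      ¬ Tendsto (fun m => ‖y m - x‖) atTop (𝓝 0) := by
  have hr0 : ∀ n, 0 ≤ r n := fun n => (hrpos n).le
  have hvle : ∀ n k, |v n k| ≤ 1 := by
    intro n k
    rw [← hv2 n]
    exact Summable.le_tsum (hv1 n) k fun j _ => abs_nonneg _
  have sble : ∀ (g : ℕ → ℝ) (C : ℝ), (∀ n, 0 ≤ g n) → (∀ n, g n ≤ C * r n) → Summable g :=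
    fun g C h0 hle => Summable.of_nonneg_of_le h0 hle (hrsum.mul_left C)
  set S0 : ℝ := ∑' n, r n * |v n 0| with hS0def
  have hS0s : Summable fun n => r n * |v n 0| :=
    sble _ 1 (fun n => mul_nonneg (hr0 n) (abs_nonneg _))
      (fun n => by nlinarith [hvle n 0, hr0 n])
  have hS0nn : 0 ≤ S0 := tsum_nonneg fun n => mul_nonneg (hr0 n) (abs_nonneg _)
  set c : ℝ := 1 + S0 with hcdef
  have hcpos : 0 < c := by linarith
  set t1 : ℝ := c⁻¹ with ht1def
  have ht1nn : 0 ≤ t1 := inv_nonneg.mpr hcpos.le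
  set Sm : ℕ → ℝ := fun m => ∑' n, r n * |v n 0 + v n (m+1)| with hSmdef
  have hSms : ∀ m, Summable fun n => r n * |v n 0 + v n (m+1)| := fun m =>
    sble _ 2 (fun n => mul_nonneg (hr0 n) (abs_nonneg _))
      (fun n => by nlinarith [hvle n 0, hvle n (m+1), hr0 n, abs_add_le (v n 0) (v n (m+1))])
  have hSmnn : ∀ m, 0 ≤ Sm m := fun m => tsum_nonneg fun n => mul_nonneg (hr0 n) (abs_nonneg _)
  have hSmle : ∀ m, Sm m ≤ 4 := by
    intro m
    calc Sm m ≤ ∑' n, 2 * r n :=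
          Summable.tsum_le_tsum (fun n => by
            nlinarith [hvle n 0, hvle n (m+1), hr0 n, abs_add_le (v n 0) (v n (m+1))])
            (hSms m) (hrsum.mul_left 2)
      _ = 2 * ∑' n, r n := tsum_mul_left
      _ ≤ 4 := by linarith
  set cm : ℕ → ℝ := fun m => 1 + Sm m with hcmdef
  have hcm1 : ∀ m, 1 ≤ cm m := fun m => by have := hSmnn m; simp only [hcmdef]; linarith
  have hcmpos : ∀ m, 0 < cm m := fun m => lt_of_lt_of_le one_pos (hcm1 m)
  have hcm5 : ∀ m, cm m ≤ 5 := fun m => by have := hSmle m; simp only [hcmdef]; linarith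
  set t2 : ℕ → ℝ := fun m => (cm m)⁻¹ with ht2def
  have ht2nn : ∀ m, 0 ≤ t2 m := fun m => inv_nonneg.mpr (hcmpos m).le
  have ht2le : ∀ m, t2 m ≤ 1 := by
    intro m
    simp only [ht2def, inv_eq_one_div]
    rw [div_le_one (hcmpos m)]
    exact hcm1 m
  have ht2lb : ∀ m, (1:ℝ)/5 ≤ t2 m := by
    intro m
    simp only [ht2def, inv_eq_one_div]
    rw [div_le_div_iff₀ (by norm_num) (hcmpos m)]
    have := hcm5 m; linarith
  -- preimages
  obtain ⟨A, hA⟩ := hsurj (RW 1 0 1) (RW_tendsto 1 0 1)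
  choose S hS using fun m => hsurj (RW 1 1 (m+1)) (RW_tendsto 1 1 (m+1))
  -- the sequence E and its summability
  set E : ℕ → ℝ := fun m => ∑' n, r n * |v n (m+1)| with hEdef
  have hEs : ∀ m, Summable fun n => r n * |v n (m+1)| := fun m =>
    sble _ 1 (fun n => mul_nonneg (hr0 n) (abs_nonneg _))
      (fun n => by nlinarith [hvle n (m+1), hr0 n])
  have hprod : Summable (fun p : ℕ × ℕ => r p.1 * |v p.1 (p.2 + 1)|) := by
    apply (summable_prod_of_nonneg (fun p => mul_nonneg (hr0 p.1) (abs_nonneg _))).mpr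
    constructor
    · intro n
      exact ((hv1 n).comp_injective (add_left_injective 1)).mul_left (r n)
    · apply sble _ 1
      · intro n
        exact tsum_nonneg fun m => mul_nonneg (hr0 n) (abs_nonneg _)
      · intro n
        have h2 : (∑' m : ℕ, |v n (m+1)|) ≤ ∑' k, |v n k| :=
          Summable.tsum_le_tsum_of_inj (fun m => m + 1) (add_left_injective 1)
            (fun k _ => abs_nonneg _) (fun m => le_refl _)
            ((hv1 n).comp_injective (add_left_injective 1)) (hv1 n)
        calc (∑' m : ℕ, r n * |v n (m+1)|) = r n * ∑' m : ℕ, |v n (m+1)| := tsum_mul_left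
          _ ≤ r n * 1 := by
              apply mul_le_mul_of_nonneg_left _ (hr0 n)
              rw [← hv2 n]
              exact h2
          _ = 1 * r n := by ring
  have hEsum : Summable E := by
    have h1 := hprod.prod_symm
    have h2 := (summable_prod_of_nonneg
      (f := fun p : ℕ × ℕ => r p.2 * |v p.2 (p.1 + 1)|)
      (fun p => mul_nonneg (hr0 p.2) (abs_nonneg _))).mp h1
    exact h2.2
  have hEtend : Tendsto E atTop (𝓝 0) := hEsum.tendsto_atTop_zero
  have hEnn : ∀ m, 0 ≤ E m := fun m => tsum_nonneg fun n => mul_nonneg (hr0 n) (abs_nonneg _)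
  -- norms of the basic vectors
  have h1x : t1 + t1 * S0 = 1 := by
    have : t1 * c = 1 := inv_mul_cancel₀ hcpos.ne'
    rw [hcdef] at this; linarith [this]
  have h1y : ∀ m, t2 m + t2 m * Sm m = 1 := by
    intro m
    have : t2 m * cm m = 1 := inv_mul_cancel₀ (hcmpos m).ne'
    rw [hcmdef] at this
    simp only at this
    linarith [this]
  have hex : e (t1 • A) = RW t1 0 1 := by
    rw [map_smul, hA, RW_smul, mul_one, mul_zero]
  have hnx : ‖t1 • A‖ = 1 := by
    rw [hnorm, hex, RW_readNorm r v _ _ _ one_ne_zero]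
    have ht : (∑' n, r n * |t1 * v n 0 + 0 * v n 1|) = t1 * S0 := by
      rw [hS0def, ← tsum_mul_left]
      exact tsum_congr fun n => by
        rw [zero_mul, add_zero, abs_mul, abs_of_nonneg ht1nn]; ring
    rw [ht, abs_of_nonneg ht1nn, abs_zero, max_eq_left ht1nn]
    exact h1x
  have hey : ∀ m, e (t2 m • S m) = RW (t2 m) (t2 m) (m+1) := by
    intro m
    rw [map_smul, hS m, RW_smul, mul_one]
  have hny : ∀ m, ‖t2 m • S m‖ = 1 := by
    intro m
    rw [hnorm, hey m, RW_readNorm r v _ _ _ (Nat.succ_ne_zero m)]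
    have ht : (∑' n, r n * |t2 m * v n 0 + t2 m * v n (m+1)|) = t2 m * Sm m := by
      rw [hSmdef, ← tsum_mul_left]
      exact tsum_congr fun n => by
        rw [← mul_add, abs_mul, abs_of_nonneg (ht2nn m)]; ring
    rw [ht, abs_of_nonneg (ht2nn m), max_self]
    exact h1y m
  have hexy : ∀ m, e (t1 • A + t2 m • S m) = RW (t1 + t2 m) (t2 m) (m+1) := by
    intro m
    rw [map_add, hex, hey m, RW_zero_snd t1 1 (m+1), RW_add, zero_add]
  -- key inequality
  have hkey : ∀ m, t1 * S0 + t2 m * Sm m ≤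
      (∑' n, r n * |(t1 + t2 m) * v n 0 + t2 m * v n (m+1)|) + 2 * E m := by
    intro m
    have hTs : Summable fun n => r n * |(t1 + t2 m) * v n 0 + t2 m * v n (m+1)| := by
      apply sble _ 3 (fun n => mul_nonneg (hr0 n) (abs_nonneg _))
      intro n
      have h1 := abs_add_le ((t1 + t2 m) * v n 0) (t2 m * v n (m+1))
      have h2 : |(t1 + t2 m) * v n 0| ≤ t1 + t2 m := by
        rw [abs_mul, abs_of_nonneg (add_nonneg ht1nn (ht2nn m))]
        nlinarith [hvle n 0, add_nonneg ht1nn (ht2nn m)]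
      have h3 : |t2 m * v n (m+1)| ≤ t2 m := by
        rw [abs_mul, abs_of_nonneg (ht2nn m)]
        nlinarith [hvle n (m+1), ht2nn m]
      have ht1le : t1 ≤ 1 := by
        simp only [ht1def, inv_eq_one_div]
        rw [div_le_one hcpos]
        linarith
      nlinarith [hr0 n, ht2le m, abs_nonneg ((t1 + t2 m) * v n 0 + t2 m * v n (m+1))]
    have hpt : ∀ n, t1 * (r n * |v n 0|) + t2 m * (r n * |v n 0 + v n (m+1)|) ≤
        r n * |(t1 + t2 m) * v n 0 + t2 m * v n (m+1)| + 2 * (r n * |v n (m+1)|) := by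
      intro n
      set p := v n 0 with hp
      set q := v n (m+1) with hq
      have h1 : (t1 + t2 m) * |p| - t2 m * |q| ≤ |(t1 + t2 m) * p + t2 m * q| := by
        have h := abs_sub_abs_le_abs_sub ((t1 + t2 m) * p) (-(t2 m * q))
        rw [abs_neg, sub_neg_eq_add] at h
        rw [abs_mul, abs_mul, abs_of_nonneg (add_nonneg ht1nn (ht2nn m)),
          abs_of_nonneg (ht2nn m)] at h
        exact h
      have h2 := abs_add_le p q
      nlinarith [mul_le_mul_of_nonneg_left h1 (hr0 n),
        mul_le_mul_of_nonneg_left h2 (mul_nonneg (hr0 n) (ht2nn m)),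
        mul_le_mul_of_nonneg_left (ht2le m) (mul_nonneg (hr0 n) (abs_nonneg q)),
        mul_nonneg (hr0 n) (abs_nonneg q)]
    calc t1 * S0 + t2 m * Sm m
        = (∑' n, t1 * (r n * |v n 0|)) + ∑' n, t2 m * (r n * |v n 0 + v n (m+1)|) := by
          rw [tsum_mul_left, tsum_mul_left]
      _ = ∑' n, (t1 * (r n * |v n 0|) + t2 m * (r n * |v n 0 + v n (m+1)|)) :=
          (Summable.tsum_add (hS0s.mul_left _) ((hSms m).mul_left _)).symm
      _ ≤ ∑' n, (r n * |(t1 + t2 m) * v n 0 + t2 m * v n (m+1)| + 2 * (r n * |v n (m+1)|)) :=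
          Summable.tsum_le_tsum hpt ((hS0s.mul_left _).add ((hSms m).mul_left _))
            (hTs.add ((hEs m).mul_left 2))
      _ = (∑' n, r n * |(t1 + t2 m) * v n 0 + t2 m * v n (m+1)|) + 2 * E m := by
          rw [Summable.tsum_add hTs ((hEs m).mul_left 2), hEdef, tsum_mul_left]
  have hxy : ∀ m, ‖t1 • A + t2 m • S m‖ =
      (t1 + t2 m) + ∑' n, r n * |(t1 + t2 m) * v n 0 + t2 m * v n (m+1)| := by
    intro m
    rw [hnorm, hexy m, RW_readNorm r v _ _ _ (Nat.succ_ne_zero m),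
      abs_of_nonneg (add_nonneg ht1nn (ht2nn m)), abs_of_nonneg (ht2nn m),
      max_eq_left (le_add_of_nonneg_left ht1nn)]
  have hlow : ∀ m, 2 - 2 * E m ≤ ‖t1 • A + t2 m • S m‖ := by
    intro m
    rw [hxy m]
    have := hkey m
    have := h1y m
    linarith
  have hupp : ∀ m, ‖t1 • A + t2 m • S m‖ ≤ 2 := by
    intro m
    calc ‖t1 • A + t2 m • S m‖ ≤ ‖t1 • A‖ + ‖t2 m • S m‖ := norm_add_le _ _
      _ = 2 := by rw [hnx, hny m]; norm_num
  refine ⟨t1 • A, hnx, fun m => t2 m • S m, hny, ?_, ?_⟩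
  · refine tendsto_of_tendsto_of_tendsto_of_le_of_le ?_ tendsto_const_nhds hlow hupp
    have h : Tendsto (fun m => (2:ℝ) - 2 * E m) atTop (𝓝 (2 - 2 * 0)) :=
      Tendsto.sub tendsto_const_nhds (hEtend.const_mul 2)
    simpa using h
  · intro hcon
    have hge : ∀ m, (1:ℝ)/5 ≤ ‖t2 m • S m - t1 • A‖ := by
      intro m
      rw [hnorm, map_sub, hex, hey m, RW_zero_snd t1 1 (m+1), RW_sub,
        RW_readNorm r v _ _ _ (Nat.succ_ne_zero m)]
      have hts : 0 ≤ ∑' n, r n * |(t2 m - t1) * v n 0 + (t2 m - 0) * v n (m+1)| :=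
        tsum_nonneg fun n => mul_nonneg (hr0 n) (abs_nonneg _)
      have hmx : (1:ℝ)/5 ≤ max |t2 m - t1| |t2 m - 0| := by
        refine le_trans ?_ (le_max_right _ _)
        rw [sub_zero, abs_of_nonneg (ht2nn m)]
        exact ht2lb m
      linarith
    obtain ⟨m, hm⟩ := (hcon.eventually_lt_const (by norm_num : (0:ℝ) < 1/5)).exists
    exact absurd (hge m) (not_le.mpr hm)
end
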